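/- arXiv:1311.1558 — 3 statements merged into one kernel-verified Lean document; each statement's English description precedes it below -/
import Mathlib

section
/- The group G = {A ∈ O(4,ℝ) : A maps the set {-1,1}^4 onto itself} has order 384; the natural action of the quotient G/{±I} on the vertices of H gives an injective group homomorphism from G/{±I} into the automorphism group of H, whose image is exactly the set of automorphisms of H that induce a permutation of the direction classes {D_1, D_2, D_3, D_4}. -/
open scoped Classical

noncomputable section

abbrev V4 := Fin 4 → ℝ

def cubeSet : Set V4 := {v | ∀ i, v i = 1 ∨ v i = -1}

abbrev CubeV := {v : V4 // v ∈ cubeSet}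

/-- `v` and `w` differ in exactly the coordinate `i`. -/
def diffExactly {n : ℕ} (v w : Fin n → ℝ) (i : Fin n) : Prop := ∀ j, v j ≠ w j ↔ j = i

/-- `v` and `w` differ in exactly one coordinate. -/
def diffOne {n : ℕ} (v w : Fin n → ℝ) : Prop := ∃ i, diffExactly v w i

instance antipodalSetoid : Setoid CubeV where
  r v w := (v : V4) = (w : V4) ∨ (v : V4) = -(w : V4)
  iseqv := by
    constructor
    · exact fun v => Or.inl rfl
    · rintro v w (h | h)
      · exact Or.inl h.symm
      · right; rw [h, neg_neg]
    · rintro u v w (h1 | h1) (h2 | h2)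
      · exact Or.inl (h1.trans h2)
      · exact Or.inr (h1.trans h2)
      · right; rw [h1, h2]
      · left; rw [h1, h2, neg_neg]

/-- vertices of the hemi-hypercube: antipodal pairs of vertices of the hypercube -/
def HVert := Quotient antipodalSetoid

/-- the hemi-hypercube graph -/
def H : SimpleGraph HVert where
  Adj x y := x ≠ y ∧ ∃ v w : CubeV, (⟦v⟧ : HVert) = x ∧ (⟦w⟧ : HVert) = y ∧
    diffOne (v : V4) (w : V4)
  symm := by
    constructor
    rintro x y ⟨hxy, v, w, hv, hw, i, hi⟩
    exact ⟨hxy.symm, w, v, hw, hv, i, fun j => by rw [← hi j]; exact ne_comm⟩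
  loopless := by constructor; rintro x ⟨h, -⟩; exact h rfl

/-- the direction class `D i` -/
def D (i : Fin 4) : Set (Sym2 HVert) :=
  {e | e ∈ H.edgeSet ∧ ∃ v w : CubeV,
    e = s((⟦v⟧ : HVert), (⟦w⟧ : HVert)) ∧ diffExactly (v : V4) (w : V4) i}

/-- a set of edges of `G` is a perfect matching -/
def IsPM {V : Type*} (G : SimpleGraph V) (M : Set (Sym2 V)) : Prop :=
  M ⊆ G.edgeSet ∧ ∀ v : V, ∃! e : Sym2 V, e ∈ M ∧ v ∈ e

/-- a chiral partition of `H`: a partition of the edge set of `H` into four perfect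
matchings, each containing exactly one edge from each direction class. -/
def IsChiralPartition (M : Fin 4 → Set (Sym2 HVert)) : Prop :=
  (∀ k, IsPM H (M k)) ∧
  (∀ e ∈ H.edgeSet, ∃! k, e ∈ M k) ∧
  (∀ k i, ∃! e, e ∈ M k ∧ e ∈ D i)

/-- the subgroup of `O(4,ℝ)` of matrices mapping the hypercube vertex set `{-1,1}^4`
onto itself -/
def bigG : Subgroup (Matrix.orthogonalGroup (Fin 4) ℝ) where
  carrier := {A | Matrix.mulVec ((A : Matrix.orthogonalGroup (Fin 4) ℝ) :
    Matrix (Fin 4) (Fin 4) ℝ) '' cubeSet = cubeSet}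
  one_mem' := by
    show Matrix.mulVec ((1 : Matrix.orthogonalGroup (Fin 4) ℝ) : Matrix (Fin 4) (Fin 4) ℝ)
        '' cubeSet = cubeSet
    rw [Matrix.UnitaryGroup.one_val]
    ext v
    constructor
    · rintro ⟨w, hw, rfl⟩; rwa [Matrix.one_mulVec]
    · intro hv; exact ⟨v, hv, Matrix.one_mulVec v⟩
  mul_mem' := by
    intro A B hA hB
    show Matrix.mulVec ((A * B : Matrix.orthogonalGroup (Fin 4) ℝ) : Matrix (Fin 4) (Fin 4) ℝ)
        '' cubeSet = cubeSet
    rw [Matrix.UnitaryGroup.mul_val]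
    have hfun : (fun v : V4 => Matrix.mulVec (A : Matrix (Fin 4) (Fin 4) ℝ)
        (Matrix.mulVec (B : Matrix (Fin 4) (Fin 4) ℝ) v))
        = Matrix.mulVec ((A : Matrix (Fin 4) (Fin 4) ℝ) * (B : Matrix (Fin 4) (Fin 4) ℝ)) :=
      funext fun v => Matrix.mulVec_mulVec v _ _
    calc Matrix.mulVec ((A : Matrix (Fin 4) (Fin 4) ℝ) * (B : Matrix (Fin 4) (Fin 4) ℝ)) '' cubeSet
        = (fun v : V4 => Matrix.mulVec (A : Matrix (Fin 4) (Fin 4) ℝ)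
            (Matrix.mulVec (B : Matrix (Fin 4) (Fin 4) ℝ) v)) '' cubeSet := by rw [hfun]
      _ = Matrix.mulVec (A : Matrix (Fin 4) (Fin 4) ℝ)
            '' (Matrix.mulVec (B : Matrix (Fin 4) (Fin 4) ℝ) '' cubeSet) :=
          (Set.image_image _ _ _).symm
      _ = Matrix.mulVec (A : Matrix (Fin 4) (Fin 4) ℝ) '' cubeSet := by rw [hB]
      _ = cubeSet := hA
  inv_mem' := by
    intro A hA
    show Matrix.mulVec ((A⁻¹ : Matrix.orthogonalGroup (Fin 4) ℝ) : Matrix (Fin 4) (Fin 4) ℝ)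
        '' cubeSet = cubeSet
    conv_lhs => rw [← hA]
    rw [Set.image_image]
    have hfun : (fun v : V4 => Matrix.mulVec ((A⁻¹ : Matrix.orthogonalGroup (Fin 4) ℝ) :
        Matrix (Fin 4) (Fin 4) ℝ) (Matrix.mulVec (A : Matrix (Fin 4) (Fin 4) ℝ) v)) = id := by
      funext v
      show Matrix.mulVec _ (Matrix.mulVec _ v) = v
      rw [Matrix.mulVec_mulVec]
      have h1 : ((A⁻¹ : Matrix.orthogonalGroup (Fin 4) ℝ) : Matrix (Fin 4) (Fin 4) ℝ)
          * (A : Matrix (Fin 4) (Fin 4) ℝ) = 1 := by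
        rw [Matrix.UnitaryGroup.inv_val]
        exact A.2.1
      rw [h1, Matrix.one_mulVec]
    rw [hfun, Set.image_id]

lemma negOne_mem_orth : (-1 : Matrix (Fin 4) (Fin 4) ℝ) ∈ Matrix.orthogonalGroup (Fin 4) ℝ := by
  rw [Matrix.mem_orthogonalGroup_iff]
  simp

lemma negG_mem : (⟨-1, negOne_mem_orth⟩ : Matrix.orthogonalGroup (Fin 4) ℝ) ∈ bigG := by
  show Matrix.mulVec (-1 : Matrix (Fin 4) (Fin 4) ℝ) '' cubeSet = cubeSet
  have h : Matrix.mulVec (-1 : Matrix (Fin 4) (Fin 4) ℝ) = fun v : V4 => -v := by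
    funext v
    rw [Matrix.neg_mulVec, Matrix.one_mulVec]
  rw [h]
  ext v
  constructor
  · rintro ⟨w, hw, rfl⟩ i
    rcases hw i with h' | h' <;> simp [h']
  · intro hv
    exact ⟨-v, fun i => by rcases hv i with h' | h' <;> simp [h'], by simp⟩

/-- the element `-I` of `G` -/
def negG : bigG := ⟨⟨-1, negOne_mem_orth⟩, negG_mem⟩

instance zpowersNegGNormal : (Subgroup.zpowers negG).Normal := by
  have hc : ∀ g : bigG, Commute negG g := by
    intro g
    have h1 : (negG : Matrix.orthogonalGroup (Fin 4) ℝ) * (g : Matrix.orthogonalGroup (Fin 4) ℝ)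
        = (g : Matrix.orthogonalGroup (Fin 4) ℝ) * (negG : Matrix.orthogonalGroup (Fin 4) ℝ) := by
      apply Subtype.ext
      show (-1 : Matrix (Fin 4) (Fin 4) ℝ) * _ = _ * (-1 : Matrix (Fin 4) (Fin 4) ℝ)
      rw [neg_one_mul, mul_neg_one]
    exact Subtype.ext h1
  constructor
  intro x hx g
  rcases Subgroup.mem_zpowers_iff.mp hx with ⟨k, rfl⟩
  have h2 : Commute (negG ^ k) g := (hc g).zpow_left k
  have h3 : g * negG ^ k * g⁻¹ = negG ^ k := by
    calc g * negG ^ k * g⁻¹ = negG ^ k * g * g⁻¹ := by rw [← h2.eq]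
      _ = negG ^ k := mul_inv_cancel_right _ _
  rw [h3]
  exact hx

/-- the quotient group `G/{±I}` -/
abbrev QG := bigG ⧸ Subgroup.zpowers negG

/-- the matrix underlying an element of `G` -/
def matOf (A : bigG) : Matrix (Fin 4) (Fin 4) ℝ :=
  ((A : Matrix.orthogonalGroup (Fin 4) ℝ) : Matrix (Fin 4) (Fin 4) ℝ)

/-- `f : G/{±I} → Aut H` is the natural action of `G/{±I}` on the vertices of `H`,
i.e. the class of `A` sends the antipodal pair of `v` to the antipodal pair of `A·v`. -/
def IsNaturalAction (f : QG →* (H ≃g H)) : Prop :=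
  ∀ (A : bigG) (v : CubeV), ∃ w : CubeV,
    (w : V4) = Matrix.mulVec (matOf A) (v : V4) ∧
    (f (QuotientGroup.mk A)) (⟦v⟧ : HVert) = (⟦w⟧ : HVert)

/-!
Every `A ∈ G` is a signed permutation matrix: its entry `A k i` equals
`((A 1) k - (A (1 - 2 eᵢ)) k) / 2 ∈ {0, ±1}`, and orthonormality of the columns leaves exactly one
nonzero entry in each column. Hence `|G| = 2⁴ · 4! = 384`.

The edges of `D i` are the pairs `{[v], [v with coordinate i negated]}`, and a signed permutation
with underlying permutation `σ` maps them onto the edges of `D (σ i)`; so `G` acts on `H` by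
automorphisms permuting the direction classes, with `-I` acting trivially. If `A` acts trivially,
then `σ = 1` and `A` fixes `[(1,1,1,1)]`, so all signs agree and `A = ±I`. Conversely, every vertex
lies on exactly one edge of each `D i`, so an automorphism inducing a given permutation `σ` of the
classes is determined by its value at `[(1,1,1,1)]` (propagate along the edges); the signed
permutations with permutation `σ` take every value there.
-/

open Matrix

/-- `cubeSet` is `signVectors (Fin 4)` by definition. -/
def signVectors (ι : Type*) : Set (ι → ℝ) := {v | ∀ i, v i = 1 ∨ v i = -1}

lemma units_int_cast_mul_self (u : ℤˣ) : ((u : ℤ) : ℝ) * ((u : ℤ) : ℝ) = 1 := by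
  rcases Int.units_eq_one_or u with rfl | rfl <;> norm_num

lemma units_int_cast_ne_zero (u : ℤˣ) : ((u : ℤ) : ℝ) ≠ 0 := by
  rcases Int.units_eq_one_or u with rfl | rfl <;> norm_num

lemma units_int_cast_mul_eq_one_or {x : ℝ} (u : ℤˣ) (hx : x = 1 ∨ x = -1) :
    ((u : ℤ) : ℝ) * x = 1 ∨ ((u : ℤ) : ℝ) * x = -1 := by
  rcases Int.units_eq_one_or u with rfl | rfl <;> rcases hx with rfl | rfl <;> norm_num

section SignedPermMatrix

variable {ι : Type*} [DecidableEq ι]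

def signedPermMatrix (s : ι → ℤˣ) (σ : Equiv.Perm ι) : Matrix ι ι ℝ :=
  Matrix.of fun k i => if k = σ i then ((s i : ℤ) : ℝ) else 0

lemma signedPermMatrix_injective :
    Function.Injective fun p : (ι → ℤˣ) × Equiv.Perm ι => signedPermMatrix p.1 p.2 := by
  rintro ⟨s, σ⟩ ⟨t, τ⟩ h
  have hentry i := congrFun (congrFun h (σ i)) i
  simp only [signedPermMatrix, of_apply, ↓reduceIte] at hentry
  have hστ : σ = τ := Equiv.ext fun i => by
    by_contra hne
    simpa [hne, units_int_cast_ne_zero] using hentry i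
  subst hστ
  simp only [↓reduceIte, Int.cast_inj, Units.val_inj] at hentry
  rw [funext hentry]

variable [Fintype ι]

lemma signedPermMatrix_mulVec_apply (s : ι → ℤˣ) (σ : Equiv.Perm ι) (v : ι → ℝ) (k : ι) :
    (signedPermMatrix s σ *ᵥ v) k = (s (σ.symm k) : ℤ) * v (σ.symm k) := by
  simp only [mulVec, dotProduct, signedPermMatrix, of_apply, ite_mul, zero_mul]
  rw [Finset.sum_eq_single (σ.symm k) (fun i _ hi => if_neg (by rintro rfl; simp at hi))
    (by simp)]
  simp

lemma signedPermMatrix_mulVec_update (s : ι → ℤˣ) (σ : Equiv.Perm ι) (v : ι → ℝ) (i : ι)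
    (a : ℝ) : signedPermMatrix s σ *ᵥ Function.update v i a =
      Function.update (signedPermMatrix s σ *ᵥ v) (σ i) ((s i : ℤ) * a) := by
  ext k
  rcases eq_or_ne k (σ i) with rfl | hk
  · simp [signedPermMatrix_mulVec_apply]
  · have : σ.symm k ≠ i := by rwa [Ne, Equiv.symm_apply_eq]
    simp [signedPermMatrix_mulVec_apply, hk, this]

lemma signedPermMatrix_transpose_mul_self (s : ι → ℤˣ) (σ : Equiv.Perm ι) :
    (signedPermMatrix s σ)ᵀ * signedPermMatrix s σ = 1 := by
  ext i j
  rcases eq_or_ne i j with rfl | hij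
  · simp [signedPermMatrix, mul_apply, units_int_cast_mul_self]
  · simp [signedPermMatrix, mul_apply, hij, hij.symm]

lemma signedPermMatrix_image_signVectors (s : ι → ℤˣ) (σ : Equiv.Perm ι) :
    (signedPermMatrix s σ *ᵥ ·) '' signVectors ι = signVectors ι := by
  refine Set.Subset.antisymm ?_ fun w hw => ⟨fun i => (s i : ℤ) * w (σ i),
    fun i => units_int_cast_mul_eq_one_or _ (hw _), ?_⟩
  · rintro _ ⟨v, hv, rfl⟩ k
    simp only [signedPermMatrix_mulVec_apply]
    exact units_int_cast_mul_eq_one_or _ (hv _)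
  · ext k
    simp [signedPermMatrix_mulVec_apply, ← mul_assoc, units_int_cast_mul_self]

end SignedPermMatrix

section Classification

variable {ι : Type*} [Fintype ι] [DecidableEq ι] {M : Matrix ι ι ℝ}

lemma entry_eq_zero_or_eq_one_or_eq_neg_one
    (hM : Set.MapsTo (M *ᵥ ·) (signVectors ι) (signVectors ι)) (k i : ι) :
    M k i = 0 ∨ M k i = 1 ∨ M k i = -1 := by
  have hflip : Function.update (1 : ι → ℝ) i (-1) ∈ signVectors ι := fun j => by
    rcases eq_or_ne j i with rfl | hj <;> simp [*]
  have hentry : M k i = ((M *ᵥ 1) k - (M *ᵥ Function.update (1 : ι → ℝ) i (-1)) k) / 2 := by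
    have : (1 : ι → ℝ) - Function.update (1 : ι → ℝ) i (-1) = Pi.single i 2 := by
      ext j; rcases eq_or_ne j i with rfl | hj <;> norm_num [*]
    rw [← Pi.sub_apply, ← mulVec_sub, this, mulVec_single]
    simp
  have hone : (1 : ι → ℝ) ∈ signVectors ι := fun _ => Or.inl rfl
  rw [hentry]
  rcases hM hone k with h1 | h1 <;> rcases hM hflip k with h2 | h2 <;>
    · simp only at h1 h2
      norm_num [h1, h2]

lemma existsUnique_entry_ne_zero (hO : Mᵀ * M = 1)
    (hM : Set.MapsTo (M *ᵥ ·) (signVectors ι) (signVectors ι)) (i : ι) :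
    ∃! k, M k i ≠ 0 := by
  have hsq (k : ι) : M k i * M k i = if M k i ≠ 0 then 1 else 0 := by
    rcases entry_eq_zero_or_eq_one_or_eq_neg_one hM k i with h | h | h <;> simp [h]
  have hsum : ∑ k, M k i * M k i = 1 := by
    simpa [mul_apply] using congrFun (congrFun hO i) i
  simp_rw [hsq, Finset.sum_boole] at hsum
  obtain ⟨k, hk⟩ := Finset.card_eq_one.1 (by exact_mod_cast hsum)
  refine ⟨k, ?_, fun k' hk' => ?_⟩
  · simpa using (Finset.ext_iff.1 hk k).2 (Finset.mem_singleton_self k)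
  · simpa [hk'] using Finset.ext_iff.1 hk k'

theorem exists_eq_signedPermMatrix (hO : Mᵀ * M = 1)
    (hM : Set.MapsTo (M *ᵥ ·) (signVectors ι) (signVectors ι)) :
    ∃ s σ, M = signedPermMatrix s σ := by
  choose π hπ hπ_unique using existsUnique_entry_ne_zero hO hM
  have hπ_inj : Function.Injective π := by
    intro i j hij
    by_contra hne
    have horth : ∑ k, M k i * M k j = 0 := by
      simpa [mul_apply, hne] using congrFun (congrFun hO i) j
    rw [Finset.sum_eq_single (π i) (fun k _ hk => by
      rw [not_not.1 (mt (hπ_unique i k) hk), zero_mul]) (by simp)] at horth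
    exact mul_ne_zero (hπ i) (hij ▸ hπ j) horth
  refine ⟨fun i => if M (π i) i = 1 then 1 else -1,
    Equiv.ofBijective π (Finite.injective_iff_bijective.1 hπ_inj), ?_⟩
  ext k i
  simp only [signedPermMatrix, of_apply, Equiv.ofBijective_apply]
  split_ifs with hk h1
  · simp [hk, h1]
  · subst hk
    rcases entry_eq_zero_or_eq_one_or_eq_neg_one hM (π i) i with h | h | h
    exacts [absurd h (hπ i), absurd h h1, by simp [h]]
  · by_contra h
    exact hk (hπ_unique i k h)

end Classification

def toBigG (p : (Fin 4 → ℤˣ) × Equiv.Perm (Fin 4)) : bigG :=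
  ⟨⟨signedPermMatrix p.1 p.2, (mem_orthogonalGroup_iff' _ _).2
    (signedPermMatrix_transpose_mul_self p.1 p.2)⟩, signedPermMatrix_image_signVectors p.1 p.2⟩

lemma matOf_toBigG (p : (Fin 4 → ℤˣ) × Equiv.Perm (Fin 4)) :
    matOf (toBigG p) = signedPermMatrix p.1 p.2 := rfl

lemma bigG_mapsTo (A : bigG) : Set.MapsTo (matOf A *ᵥ ·) cubeSet cubeSet :=
  fun _ hv => (show _ '' cubeSet = cubeSet from A.2) ▸ Set.mem_image_of_mem _ hv

lemma toBigG_bijective : Function.Bijective toBigG := by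
  refine ⟨fun p q h => signedPermMatrix_injective (congrArg matOf h), fun A => ?_⟩
  obtain ⟨s, σ, hA⟩ :=
    exists_eq_signedPermMatrix ((mem_orthogonalGroup_iff' _ _).1 A.1.2) (bigG_mapsTo A)
  exact ⟨(s, σ), Subtype.ext (Subtype.ext hA.symm)⟩

theorem card_bigG : Nat.card bigG = 384 := by
  rw [← Nat.card_congr (Equiv.ofBijective _ toBigG_bijective)]
  simp [Nat.card_eq_fintype_card, Fintype.card_units_int, Fintype.card_perm, Nat.factorial]

/-- `⟦v⟧` elaborates with type `Quotient antipodalSetoid`, where the instances declared on `HVert`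
below are not found; `HVert.mk` keeps vertices typed as `HVert`. -/
def HVert.mk (v : CubeV) : HVert := ⟦v⟧

lemma HVert.mk_surjective : Function.Surjective HVert.mk := Quotient.mk_surjective

lemma HVert.mk_eq_mk_iff {v w : CubeV} :
    HVert.mk v = HVert.mk w ↔ (v : V4) = w ∨ (v : V4) = -w := Quotient.eq

section Cube

variable {i j : Fin 4} {v w : CubeV} {e e' : Sym2 HVert}

def allOnes : CubeV := ⟨1, fun _ => Or.inl rfl⟩

lemma CubeV.apply_ne_neg_apply (v : CubeV) (k : Fin 4) : (v : V4) k ≠ -(v : V4) k := by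
  rcases v.2 k with h | h <;> rw [h] <;> norm_num

def flipAt (i : Fin 4) (v : CubeV) : CubeV :=
  ⟨Function.update v i (-(v : V4) i), fun k => by
    rcases eq_or_ne k i with rfl | hk
    · rcases v.2 k with h | h <;> simp [h]
    · simpa [hk] using v.2 k⟩

lemma coe_flipAt (i : Fin 4) (v : CubeV) :
    (flipAt i v : V4) = Function.update (v : V4) i (-(v : V4) i) := rfl

lemma flipAt_apply_self (i : Fin 4) (v : CubeV) : (flipAt i v : V4) i = -(v : V4) i := by
  simp [coe_flipAt]

lemma flipAt_apply_of_ne (v : CubeV) {k : Fin 4} (hk : k ≠ i) :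
    (flipAt i v : V4) k = (v : V4) k := by
  simp [coe_flipAt, hk]

lemma flipAt_flipAt (i : Fin 4) (v : CubeV) : flipAt i (flipAt i v) = v := by
  ext k
  rcases eq_or_ne k i with rfl | hk
  · simp [flipAt_apply_self]
  · simp [flipAt_apply_of_ne _ hk]

lemma mk_flipAt_congr (i : Fin 4) (h : HVert.mk v = HVert.mk w) :
    HVert.mk (flipAt i v) = HVert.mk (flipAt i w) := by
  refine HVert.mk_eq_mk_iff.2 ((HVert.mk_eq_mk_iff.1 h).imp (fun h => ?_) fun h => ?_)
  · simp [coe_flipAt, h]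
  · simp [coe_flipAt, h, ← Function.update_neg]

lemma mk_ne_mk_of_apply_eq_of_apply_ne {a b : Fin 4} (ha : (v : V4) a = (w : V4) a)
    (hb : (v : V4) b ≠ (w : V4) b) : HVert.mk v ≠ HVert.mk w := by
  rintro hvw
  rcases HVert.mk_eq_mk_iff.1 hvw with h | h
  · exact hb (congrFun h b)
  · exact v.apply_ne_neg_apply a (by simpa [ha] using congrFun h a)

lemma exists_ne_and_ne (i j : Fin 4) : ∃ k, k ≠ i ∧ k ≠ j := by
  revert i j; decide

lemma mk_ne_mk_flipAt (i : Fin 4) (v : CubeV) : HVert.mk v ≠ HVert.mk (flipAt i v) := by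
  obtain ⟨k, hk, -⟩ := exists_ne_and_ne i i
  exact mk_ne_mk_of_apply_eq_of_apply_ne (flipAt_apply_of_ne v hk).symm
    (by rw [flipAt_apply_self]; exact v.apply_ne_neg_apply i)

lemma eq_of_mk_flipAt_eq (h : HVert.mk (flipAt i v) = HVert.mk (flipAt j v)) : i = j := by
  by_contra hij
  obtain ⟨k, hki, hkj⟩ := exists_ne_and_ne i j
  refine mk_ne_mk_of_apply_eq_of_apply_ne (a := k) (b := i) ?_ ?_ h
  · rw [flipAt_apply_of_ne v hki, flipAt_apply_of_ne v hkj]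
  · rw [flipAt_apply_self, flipAt_apply_of_ne v hij]
    exact (v.apply_ne_neg_apply i).symm

lemma diffExactly_flipAt (i : Fin 4) (v : CubeV) : diffExactly (v : V4) (flipAt i v) i := by
  intro k
  rcases eq_or_ne k i with rfl | hk
  · simpa [flipAt_apply_self] using v.apply_ne_neg_apply k
  · simp [flipAt_apply_of_ne v hk, hk]

lemma eq_flipAt_of_diffExactly (h : diffExactly (v : V4) w i) : w = flipAt i v := by
  ext k
  rcases eq_or_ne k i with rfl | hk
  · rw [flipAt_apply_self]
    have hne := (h k).2 rfl
    rcases v.2 k with hv | hv <;> rcases w.2 k with hw | hw <;> simp_all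
  · rw [flipAt_apply_of_ne v hk]
    exact (not_not.1 (mt (h k).1 hk)).symm

lemma mem_D_iff : e ∈ D i ↔ ∃ v, e = s(HVert.mk v, HVert.mk (flipAt i v)) := by
  constructor
  · rintro ⟨-, v, w, rfl, h⟩
    exact ⟨v, by rw [eq_flipAt_of_diffExactly h]; rfl⟩
  · rintro ⟨v, rfl⟩
    exact ⟨⟨mk_ne_mk_flipAt i v, v, _, rfl, rfl, i, diffExactly_flipAt i v⟩, v, _, rfl,
      diffExactly_flipAt i v⟩

lemma adj_iff_exists_mem_D {x y : HVert} : H.Adj x y ↔ ∃ i, s(x, y) ∈ D i := by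
  constructor
  · rintro hxy
    obtain ⟨-, v, w, rfl, rfl, i, h⟩ := id hxy
    exact ⟨i, hxy, v, w, rfl, h⟩
  · rintro ⟨i, hxy, -⟩
    exact hxy

lemma eq_of_mem_D (he : e ∈ D i) (hv : HVert.mk v ∈ e) :
    e = s(HVert.mk v, HVert.mk (flipAt i v)) := by
  obtain ⟨w, rfl⟩ := mem_D_iff.1 he
  rcases Sym2.mem_iff.1 hv with h | h
  · rw [h, mk_flipAt_congr i h]
  · rw [h, mk_flipAt_congr i h, flipAt_flipAt, Sym2.eq_swap]

lemma eq_of_mem_D_of_mem {x : HVert} (he : e ∈ D i) (he' : e' ∈ D i) (hx : x ∈ e)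
    (hx' : x ∈ e') : e = e' := by
  obtain ⟨v, rfl⟩ := HVert.mk_surjective x
  rw [eq_of_mem_D he hx, eq_of_mem_D he' hx']

lemma D_injective : Function.Injective D := by
  intro i j hij
  have hi : s(HVert.mk allOnes, HVert.mk (flipAt i allOnes)) ∈ D j :=
    hij ▸ mem_D_iff.2 ⟨allOnes, rfl⟩
  exact eq_of_mk_flipAt_eq (Sym2.congr_right.1 (eq_of_mem_D hi (Sym2.mem_mk_left _ _)))

end Cube

section Action

instance : SMul bigG CubeV := ⟨fun A v => ⟨matOf A *ᵥ v, bigG_mapsTo A v.2⟩⟩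

lemma coe_smul (A : bigG) (v : CubeV) : ((A • v : CubeV) : V4) = matOf A *ᵥ v := rfl

instance : MulAction bigG CubeV where
  one_smul v := Subtype.ext (one_mulVec (v : V4))
  mul_smul A B v := Subtype.ext (mulVec_mulVec (v : V4) (matOf A) (matOf B)).symm

instance : MulAction bigG HVert where
  smul A := Quotient.map (A • ·) fun v w h => by
    rcases h with h | h
    · exact Or.inl (congrArg (matOf A *ᵥ ·) h)
    · exact Or.inr ((congrArg (matOf A *ᵥ ·) h).trans (mulVec_neg _ _))
  one_smul x := by
    obtain ⟨v, rfl⟩ := HVert.mk_surjective x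
    exact congrArg HVert.mk (one_smul bigG v)
  mul_smul A B x := by
    obtain ⟨v, rfl⟩ := HVert.mk_surjective x
    exact congrArg HVert.mk (mul_smul A B v)

lemma smul_mk (A : bigG) (v : CubeV) : A • HVert.mk v = HVert.mk (A • v) := rfl

lemma toBigG_smul_flipAt (p : (Fin 4 → ℤˣ) × Equiv.Perm (Fin 4)) (i : Fin 4) (v : CubeV) :
    toBigG p • flipAt i v = flipAt (p.2 i) (toBigG p • v) := by
  ext : 1
  simp only [coe_smul, coe_flipAt, matOf_toBigG, signedPermMatrix_mulVec_update,
    signedPermMatrix_mulVec_apply]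
  simp

lemma image_D_toBigG (p : (Fin 4 → ℤˣ) × Equiv.Perm (Fin 4)) (i : Fin 4) :
    Sym2.map (toBigG p • ·) '' D i = D (p.2 i) := by
  ext e
  simp only [Set.mem_image, mem_D_iff]
  constructor
  · rintro ⟨_, ⟨v, rfl⟩, rfl⟩
    exact ⟨toBigG p • v, by simp [smul_mk, toBigG_smul_flipAt]⟩
  · rintro ⟨w, rfl⟩
    refine ⟨_, ⟨(toBigG p)⁻¹ • w, rfl⟩, ?_⟩
    simp [smul_mk, toBigG_smul_flipAt]

lemma adj_smul (A : bigG) {x y : HVert} (h : H.Adj x y) : H.Adj (A • x) (A • y) := by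
  obtain ⟨p, rfl⟩ := toBigG_bijective.2 A
  obtain ⟨i, hi⟩ := adj_iff_exists_mem_D.1 h
  exact adj_iff_exists_mem_D.2 ⟨p.2 i, image_D_toBigG p i ▸ ⟨_, hi, rfl⟩⟩

def autHom : bigG →* (H ≃g H) where
  toFun A :=
    ⟨MulAction.toPerm A, fun {x y} => ⟨fun h => by simpa using adj_smul A⁻¹ h, adj_smul A⟩⟩
  map_one' := RelIso.ext (one_smul bigG)
  map_mul' A B := RelIso.ext (mul_smul A B)

lemma autHom_negG : autHom negG = 1 := by
  refine RelIso.ext fun x => ?_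
  obtain ⟨v, rfl⟩ := HVert.mk_surjective x
  refine HVert.mk_eq_mk_iff.2 (Or.inr ?_)
  change (-1 : Matrix (Fin 4) (Fin 4) ℝ) *ᵥ (v : V4) = -v
  rw [neg_mulVec, one_mulVec]

def autQuot : QG →* (H ≃g H) :=
  QuotientGroup.lift _ autHom (Subgroup.zpowers_le.2 autHom_negG)

lemma coe_autQuot_mk (A : bigG) : ⇑(autQuot (QuotientGroup.mk A)) = (A • ·) := rfl

end Action

lemma eq_one_or_eq_negG_of_autHom_eq_one {A : bigG} (h : autHom A = 1) :
    A = 1 ∨ A = negG := by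
  obtain ⟨⟨s, σ⟩, rfl⟩ := toBigG_bijective.2 A
  have hid : (toBigG (s, σ) • · : HVert → HVert) = id := funext (DFunLike.congr_fun h)
  have hσ : σ = Equiv.refl _ := Equiv.ext fun i => D_injective <| by
    rw [← image_D_toBigG (s, σ) i, hid, Sym2.map_id, Set.image_id]
    rfl
  subst hσ
  set M := signedPermMatrix s (Equiv.refl _) with hM
  have h1 : M *ᵥ 1 = 1 ∨ M *ᵥ 1 = -1 := HVert.mk_eq_mk_iff.1 (congrFun hid (HVert.mk allOnes))
  have hdiag : M = diagonal (M *ᵥ 1) := by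
    ext k i
    rw [diagonal_apply, hM, signedPermMatrix_mulVec_apply]
    rcases eq_or_ne k i with rfl | h <;> simp [signedPermMatrix, *]
  rcases h1 with h1 | h1
  · left
    refine Subtype.ext (Subtype.ext (hdiag.trans ?_))
    rw [h1]
    rfl
  · right
    refine Subtype.ext (Subtype.ext (hdiag.trans ?_))
    rw [h1]
    change diagonal (-1) = -1
    rw [← diagonal_one', diagonal_neg]
    rfl

lemma autQuot_injective : Function.Injective autQuot := by
  refine (injective_iff_map_eq_one _).2 fun q hq => ?_
  induction q using QuotientGroup.induction_on with | _ A => ?_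
  rw [QuotientGroup.eq_one_iff]
  rcases eq_one_or_eq_negG_of_autHom_eq_one hq with rfl | rfl
  exacts [one_mem _, Subgroup.mem_zpowers _]

section Rigidity

variable {φ ψ : H ≃g H} {σ : Fin 4 → Fin 4}

lemma apply_mk_flipAt_eq (hφ : ∀ i, Sym2.map φ '' D i = D (σ i))
    (hψ : ∀ i, Sym2.map ψ '' D i = D (σ i)) {v : CubeV} (hv : φ (HVert.mk v) = ψ (HVert.mk v))
    (i : Fin 4) : φ (HVert.mk (flipAt i v)) = ψ (HVert.mk (flipAt i v)) := by
  have hD (χ : H ≃g H) (hχ : ∀ i, Sym2.map χ '' D i = D (σ i)) :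
      s(χ (HVert.mk v), χ (HVert.mk (flipAt i v))) ∈ D (σ i) :=
    hχ i ▸ ⟨_, mem_D_iff.2 ⟨v, rfl⟩, rfl⟩
  have h := eq_of_mem_D_of_mem (hD φ hφ) (hD ψ hψ) (Sym2.mem_mk_left _ _)
    (hv ▸ Sym2.mem_mk_left _ _)
  rw [hv] at h
  exact Sym2.congr_right.1 h

lemma eq_of_image_D_eq_of_apply_allOnes_eq (hφ : ∀ i, Sym2.map φ '' D i = D (σ i))
    (hψ : ∀ i, Sym2.map ψ '' D i = D (σ i))
    (h : φ (HVert.mk allOnes) = ψ (HVert.mk allOnes)) : φ = ψ := by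
  suffices ∀ S : Finset (Fin 4), ∀ v : CubeV, (∀ k ∉ S, (v : V4) k = 1) →
      φ (HVert.mk v) = ψ (HVert.mk v) by
    refine RelIso.ext fun x => ?_
    obtain ⟨v, rfl⟩ := HVert.mk_surjective x
    exact this Finset.univ v (by simp)
  intro S
  induction S using Finset.induction_on with
  | empty =>
    intro v hv
    obtain rfl : v = allOnes := Subtype.ext (funext fun k => hv k (Finset.notMem_empty k))
    exact h
  | insert a S _ ih =>
    intro v hv
    by_cases hva : (v : V4) a = 1
    · refine ih v fun k hk => ?_
      rcases eq_or_ne k a with rfl | hka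
      exacts [hva, hv k (by simp [hka, hk])]
    · rw [← flipAt_flipAt a v]
      refine apply_mk_flipAt_eq hφ hψ (ih _ fun k hk => ?_) a
      rcases eq_or_ne k a with rfl | hka
      · rw [flipAt_apply_self, (v.2 k).resolve_left hva, neg_neg]
      · rw [flipAt_apply_of_ne v hka]
        exact hv k (by simp [hka, hk])

end Rigidity

lemma exists_toBigG_smul_allOnes_eq (σ : Equiv.Perm (Fin 4)) (w : CubeV) :
    ∃ s, toBigG (s, σ) • allOnes = w := by
  refine ⟨fun i => if (w : V4) (σ i) = 1 then 1 else -1, Subtype.ext (funext fun k => ?_)⟩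
  rw [coe_smul, matOf_toBigG, signedPermMatrix_mulVec_apply]
  rcases w.2 k with h | h <;> norm_num [h, allOnes]

lemma range_autQuot :
    Set.range autQuot = {φ : H ≃g H | ∀ i : Fin 4, ∃ j : Fin 4, Sym2.map ⇑φ '' D i = D j} := by
  ext φ
  constructor
  · rintro ⟨q, rfl⟩ i
    induction q using QuotientGroup.induction_on with | _ A => ?_
    obtain ⟨p, rfl⟩ := toBigG_bijective.2 A
    exact ⟨p.2 i, by rw [coe_autQuot_mk, image_D_toBigG]⟩
  · intro hφ
    choose σ hσ using hφ
    have hσ_inj : Function.Injective σ := fun i j hij => D_injective <|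
      Set.image_injective.2 (Sym2.map.injective φ.injective) ((hσ i).trans (hij ▸ (hσ j).symm))
    let τ := Equiv.ofBijective σ (Finite.injective_iff_bijective.1 hσ_inj)
    obtain ⟨v, hv⟩ := HVert.mk_surjective (φ (HVert.mk allOnes))
    obtain ⟨s, hs⟩ := exists_toBigG_smul_allOnes_eq τ v
    refine ⟨QuotientGroup.mk (toBigG (s, τ)),
      eq_of_image_D_eq_of_apply_allOnes_eq (σ := σ) ?_ hσ ?_⟩
    · exact image_D_toBigG (s, τ)
    · rw [← hv, ← hs]
      rfl

/-- `G = {A ∈ O(4,ℝ) : A·{-1,1}^4 = {-1,1}^4}` has order 384; the natural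
action of `G/{±I}` on the vertices of `H` gives an injective group homomorphism from
`G/{±I}` into the automorphism group of `H`, whose image is exactly the set of
automorphisms of `H` inducing a permutation of the direction classes. -/
theorem stmt_5 :
    Nat.card bigG = 384 ∧
    ∃ f : QG →* (H ≃g H),
      IsNaturalAction f ∧
      Function.Injective f ∧
      Set.range ⇑f = {φ : H ≃g H | ∀ i : Fin 4, ∃ j : Fin 4, Sym2.map ⇑φ '' D i = D j} :=
  ⟨card_bigG, autQuot, fun A v => ⟨A • v, rfl, rfl⟩, autQuot_injective, range_autQuot⟩
end
end

section
/- A partition of the edge set of H into four perfect matchings is a chiral partition (each matching contains exactly one edge of each direction class) if and only if every 4-cycle of H whose edge set is contained in D_i ∪ D_j for some pair of distinct indices i ≠ j contains exactly one edge from each of the four matchings. -/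
open scoped Classical

noncomputable section

/-!
`D i` consists of the edges `s(x, flip i x)`, where the commuting fixed-point-free involutions
`HVert.flip i` change the sign of the `i`-th coordinate; so each `D i` is a perfect matching. A
4-cycle inside `D i ∪ D j` alternates between the two classes, so two of its edges either share a
vertex or are opposite edges of one class. In a chiral partition such edges lie in different
matchings, and four edges in pairwise different matchings meet each of the four matchings once.
Conversely, every vertex outside `s(x, flip c x)` is `flip j x` or `flip c (flip j x)` for some
`j ≠ c`, so two disjoint edges of `D c` lie on a common square in `D c ∪ D j`; the cycle condition thus leaves at
most one edge of each class in a matching, and a perfect matching of the 8 vertices has 4 edges,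
hence exactly one in each class.
-/

section Matchings

variable {V : Type*}

def VertexDisjoint (S : Set (Sym2 V)) : Prop :=
  ∀ ⦃e⦄, e ∈ S → ∀ ⦃f⦄, f ∈ S → ∀ ⦃x⦄, x ∈ e → x ∈ f → e = f

theorem vertexDisjoint_range_of_involutive {f : V → V} (hf : Function.Involutive f) :
    VertexDisjoint (Set.range fun x => s(x, f x)) := by
  have key : ∀ {x z : V}, z ∈ s(x, f x) → s(x, f x) = s(z, f z) := by
    intro x z hz
    rcases Sym2.mem_iff.1 hz with rfl | rfl
    · rfl
    · rw [hf, Sym2.eq_swap]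
  rintro _ ⟨x, rfl⟩ _ ⟨y, rfl⟩ z hx hy
  dsimp only at hx hy ⊢
  rw [key hx, key hy]

namespace IsPM

variable {G : SimpleGraph V} {M : Set (Sym2 V)}

theorem vertexDisjoint (hM : IsPM G M) : VertexDisjoint M :=
  fun _ he _ hf x hxe hxf => (hM.2 x).unique ⟨he, hxe⟩ ⟨hf, hxf⟩

theorem card_le_two_mul_ncard [Finite V] (hM : IsPM G M) : Nat.card V ≤ 2 * M.ncard := by
  have := Fintype.ofFinite V
  choose φ hφ using fun x => (hM.2 x).exists
  have hfiber : ∀ e ∈ Finset.univ.image φ, (Finset.univ.filter (φ · = e)).card ≤ 2 := by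
    intro e _
    induction e with
    | h a b =>
      refine (Finset.card_le_card (t := {a, b}) fun x hx => ?_).trans Finset.card_le_two
      have := (hφ x).2
      rw [(Finset.mem_filter.1 hx).2, Sym2.mem_iff] at this
      simpa using this
  calc Nat.card V = Finset.univ.card := by rw [Nat.card_eq_fintype_card, Finset.card_univ]
    _ ≤ 2 * (Finset.univ.image φ).card := Finset.card_le_mul_card_image _ _ hfiber
    _ ≤ 2 * M.ncard := by
      rw [← Set.ncard_coe_finset]
      gcongr
      · exact Set.toFinite M
      · intro e he
        obtain ⟨x, -, rfl⟩ := Finset.mem_image.1 he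
        exact (hφ x).1

end IsPM

theorem existsUnique_mem_inter_of_le_ncard {α : Type*} {n : ℕ} {s : Set α} {A : Fin n → Set α}
    (hs : n ≤ s.ncard) (hcover : ∀ e ∈ s, ∃ k, e ∈ A k) (hsep : ∀ k, (s ∩ A k).Subsingleton)
    (k : Fin n) : ∃! e, e ∈ s ∧ e ∈ A k := by
  refine existsUnique_of_exists_of_unique ?_ fun e f he hf => hsep k he hf
  by_contra! hk
  have : ∀ e, ∃ k', e ∈ s → e ∈ A k' := fun e =>
    (em (e ∈ s)).elim (fun he => (hcover e he).imp fun _ h _ => h) fun he => ⟨k, (he · |>.elim)⟩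
  choose c hc using this
  have hinj : Set.InjOn c s := fun e he f hf hef =>
    hsep (c e) ⟨he, hc e he⟩ ⟨hf, hef ▸ hc f hf⟩
  have hmaps : ∀ e ∈ s, c e ∈ ((Finset.univ.erase k : Finset (Fin n)) : Set (Fin n)) :=
    fun e he => by simpa using fun h : c e = k => hk e he (h ▸ hc e he)
  have := Set.ncard_le_ncard_of_injOn c hmaps hinj
  rw [Set.ncard_coe_finset, Finset.card_erase_of_mem (Finset.mem_univ k), Finset.card_univ,
    Fintype.card_fin] at this
  have := k.pos
  omega

namespace SimpleGraph.Walk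

variable {G : SimpleGraph V}

theorem exists_edges_eq_of_length_eq_four {u w : V} (p : G.Walk u w) (hp : p.length = 4) :
    ∃ a b c, p.edges = [s(u, a), s(a, b), s(b, c), s(c, w)] := by
  match p, hp with
  | cons _ (cons _ (cons _ (cons _ nil))), _ => exact ⟨_, _, _, rfl⟩

theorem IsTrail.ncard_setOf_mem_edges {u w : V} {p : G.Walk u w} (hp : p.IsTrail) :
    {e | e ∈ p.edges}.ncard = p.length := by
  rw [← List.coe_toFinset, Set.ncard_coe_finset, List.toFinset_card_of_nodup hp.edges_nodup,
    length_edges]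

theorem isCycle_square {a b c d : V} (hab : G.Adj a b) (hbc : G.Adj b c) (hcd : G.Adj c d)
    (hda : G.Adj d a) (hac : a ≠ c) (hbd : b ≠ d) :
    (cons hab (cons hbc (cons hcd (cons hda nil)))).IsCycle := by
  have := hab.ne; have := hbc.ne; have := hcd.ne; have := hda.ne
  simp only [cons_isCycle_iff, cons_isPath_iff, edges_cons, support_cons, edges_nil, support_nil,
    List.mem_cons, List.not_mem_nil, Sym2.eq_iff, IsPath.nil]
  tauto

theorem IsCycle.subsingleton_edges_inter {ι : Type*} {D : ι → Set (Sym2 V)}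
    (hD : ∀ c, VertexDisjoint (D c)) {M : Set (Sym2 V)} (hM : VertexDisjoint M)
    (hMD : ∀ c, (M ∩ D c).Subsingleton) {v : V} {p : G.Walk v v} (hp : p.IsCycle)
    (h4 : p.length = 4) {i j : ι} (hij : ∀ e ∈ p.edges, e ∈ D i ∪ D j) :
    ({e | e ∈ p.edges} ∩ M).Subsingleton := by
  obtain ⟨a, b, c, hedges⟩ := p.exists_edges_eq_of_length_eq_four h4
  have hnd := hp.edges_nodup
  rw [hedges] at hnd hij
  simp only [hedges, List.mem_cons, List.not_mem_nil, or_false, forall_eq_or_imp, forall_eq,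
    List.nodup_cons, not_or, List.nodup_nil] at hnd hij ⊢
  obtain ⟨⟨n01, -, -⟩, ⟨n12, -⟩, n23, -⟩ := hnd
  obtain ⟨h0, h1, h2, h3⟩ := hij
  have h01 : ∀ l, s(v, a) ∈ D l → s(a, b) ∉ D l := fun l he hf =>
    n01 (hD l he hf (Sym2.mem_mk_right v a) (Sym2.mem_mk_left a b))
  have h12 : ∀ l, s(a, b) ∈ D l → s(b, c) ∉ D l := fun l he hf =>
    n12 (hD l he hf (Sym2.mem_mk_right a b) (Sym2.mem_mk_left b c))
  have h23 : ∀ l, s(b, c) ∈ D l → s(c, v) ∉ D l := fun l he hf =>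
    n23 (hD l he hf (Sym2.mem_mk_right b c) (Sym2.mem_mk_left c v))
  -- the two classes alternate around the square
  have opp : ∀ {e f g}, e ∈ D i ∪ D j → f ∈ D i ∪ D j → g ∈ D i ∪ D j →
      (∀ l, e ∈ D l → f ∉ D l) → (∀ l, f ∈ D l → g ∉ D l) → ∃ l, e ∈ D l ∧ g ∈ D l := by
    rintro e f g (he | he) (hf | hf) (hg | hg) hef hfg <;>
      first | exact ⟨_, he, hg⟩ | exact absurd hf (hef _ he) | exact absurd hg (hfg _ hf)
  obtain ⟨l, h0l, h2l⟩ := opp h0 h1 h2 h01 h12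
  obtain ⟨l', h1l, h3l⟩ := opp h1 h2 h3 h12 h23
  rintro e ⟨he, heM⟩ f ⟨hf, hfM⟩
  rcases he with rfl | rfl | rfl | rfl <;> rcases hf with rfl | rfl | rfl | rfl
  -- two edges of the square either share an endpoint or are opposite
  all_goals first
    | rfl
    | exact hM heM hfM (Sym2.mem_mk_left _ _) (Sym2.mem_mk_left _ _)
    | exact hM heM hfM (Sym2.mem_mk_left _ _) (Sym2.mem_mk_right _ _)
    | exact hM heM hfM (Sym2.mem_mk_right _ _) (Sym2.mem_mk_left _ _)
    | exact hM heM hfM (Sym2.mem_mk_right _ _) (Sym2.mem_mk_right _ _)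
    | exact hMD l ⟨heM, h0l⟩ ⟨hfM, h2l⟩
    | exact hMD l ⟨heM, h2l⟩ ⟨hfM, h0l⟩
    | exact hMD l' ⟨heM, h1l⟩ ⟨hfM, h3l⟩
    | exact hMD l' ⟨heM, h3l⟩ ⟨hfM, h1l⟩

end SimpleGraph.Walk

end Matchings

namespace CubeV

def flip (i : Fin 4) (v : CubeV) : CubeV :=
  ⟨Function.update v.1 i (-v.1 i), fun j => by
    rcases eq_or_ne j i with rfl | h
    · rcases v.2 j with h | h <;> simp [h]
    · simpa [h] using v.2 j⟩

theorem flip_apply (i : Fin 4) (v : CubeV) (j : Fin 4) :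
    (flip i v).1 j = if j = i then -v.1 j else v.1 j := by
  rcases eq_or_ne j i with rfl | h <;> simp [flip, *]

theorem apply_ne_neg (v : CubeV) (j : Fin 4) : v.1 j ≠ -v.1 j := by
  rcases v.2 j with h | h <;> rw [h] <;> norm_num

theorem diffExactly_flip (i : Fin 4) (v : CubeV) : diffExactly v.1 (flip i v).1 i := by
  intro j
  rw [flip_apply]
  split_ifs with h <;> simp [h, apply_ne_neg]

theorem eq_flip_of_diffExactly {i : Fin 4} {v w : CubeV} (h : diffExactly v.1 w.1 i) :
    w = flip i v := by
  refine Subtype.ext (funext fun j => ?_)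
  rw [flip_apply]
  split_ifs with hj
  · have := (h j).2 hj
    rcases v.2 j with hv | hv <;> rcases w.2 j with hw | hw <;> simp_all
  · exact not_not.1 (mt (h j).1 hj) |>.symm

theorem flip_rel {i : Fin 4} {v w : CubeV} (h : v ≈ w) : flip i v ≈ flip i w := by
  rcases h with h | h
  · exact Or.inl (by rw [Subtype.ext h])
  · right
    funext j
    simp only [flip_apply, h, Pi.neg_apply]
    split_ifs <;> rfl

def ofBool (b : Fin 4 → Bool) : CubeV :=
  ⟨fun j => if b j then 1 else -1, fun j => by by_cases h : b j <;> simp [h]⟩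

theorem ofBool_surjective : Function.Surjective ofBool := fun v =>
  ⟨fun j => decide (v.1 j = 1), Subtype.ext (funext fun j => by
    rcases v.2 j with h | h <;> norm_num [ofBool, h])⟩

theorem flip_ofBool (i : Fin 4) (b : Fin 4 → Bool) :
    flip i (ofBool b) = ofBool (Function.update b i (!b i)) := by
  refine Subtype.ext (funext fun j => ?_)
  rw [flip_apply]
  rcases eq_or_ne j i with rfl | h
  · cases h : b j <;> simp [ofBool, h]
  · simp [ofBool, h]

theorem ofBool_rel_iff (a b : Fin 4 → Bool) :
    ofBool a ≈ ofBool b ↔ a = b ∨ a = fun j => !b j := by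
  have hpos : ∀ x y : Bool, ((if x then 1 else -1 : ℝ) = if y then 1 else -1) ↔ x = y := by
    rintro (_ | _) (_ | _) <;> norm_num
  have hneg : ∀ x y : Bool, ((if x then 1 else -1 : ℝ) = -if y then 1 else -1) ↔ x = !y := by
    rintro (_ | _) (_ | _) <;> norm_num
  show (_ = _ ∨ _ = _) ↔ _
  simp only [funext_iff, ofBool, Pi.neg_apply, hpos, hneg]

end CubeV

namespace HVert

def flip (i : Fin 4) : HVert → HVert := Quotient.map (CubeV.flip i) fun _ _ => CubeV.flip_rel

-- Through `ofBool`, facts about `flip` become finite checks on the 16 sign vectors.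
def ofBool (b : Fin 4 → Bool) : HVert := ⟦CubeV.ofBool b⟧

theorem ofBool_surjective : Function.Surjective ofBool := by
  rintro ⟨v⟩
  obtain ⟨b, rfl⟩ := CubeV.ofBool_surjective v
  exact ⟨b, rfl⟩

theorem ofBool_eq_ofBool_iff {a b : Fin 4 → Bool} :
    ofBool a = ofBool b ↔ a = b ∨ a = fun j => !b j :=
  Quotient.eq.trans (CubeV.ofBool_rel_iff a b)

theorem flip_ofBool (i : Fin 4) (b : Fin 4 → Bool) :
    flip i (ofBool b) = ofBool (Function.update b i (!b i)) :=
  congrArg _ (CubeV.flip_ofBool i b)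

instance : Finite HVert := Finite.of_surjective _ ofBool_surjective

theorem flip_flip (i : Fin 4) (x : HVert) : flip i (flip i x) = x := by
  obtain ⟨b, rfl⟩ := ofBool_surjective x
  simp only [flip_ofBool, ofBool_eq_ofBool_iff]
  decide +kernel +revert

theorem flip_comm (i j : Fin 4) (x : HVert) : flip i (flip j x) = flip j (flip i x) := by
  obtain ⟨b, rfl⟩ := ofBool_surjective x
  simp only [flip_ofBool, ofBool_eq_ofBool_iff]
  decide +kernel +revert

theorem flip_ne_self (i : Fin 4) (x : HVert) : flip i x ≠ x := by
  obtain ⟨b, rfl⟩ := ofBool_surjective x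
  simp only [flip_ofBool, ne_eq, ofBool_eq_ofBool_iff]
  decide +kernel +revert

theorem flip_flip_ne_self {i j : Fin 4} (hij : i ≠ j) (x : HVert) : flip i (flip j x) ≠ x := by
  obtain ⟨b, rfl⟩ := ofBool_surjective x
  simp only [flip_ofBool, ne_eq, ofBool_eq_ofBool_iff]
  decide +kernel +revert

theorem exists_eq_flip_or_eq_flip_flip (c : Fin 4) {x y : HVert} (hx : y ≠ x) (hcx : y ≠ flip c x) :
    ∃ j ≠ c, y = flip j x ∨ y = flip c (flip j x) := by
  obtain ⟨a, rfl⟩ := ofBool_surjective x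
  obtain ⟨b, rfl⟩ := ofBool_surjective y
  simp only [flip_ofBool, ne_eq, ofBool_eq_ofBool_iff] at hx hcx ⊢
  decide +kernel +revert

theorem card_eq_eight : Nat.card HVert = 8 := by
  have hbij : Function.Bijective fun b : Fin 3 → Bool => ofBool (Fin.cons false b) := by
    refine ⟨fun a b h => ?_, fun x => ?_⟩
    · rw [ofBool_eq_ofBool_iff] at h
      revert a b; decide +kernel
    · obtain ⟨b, rfl⟩ := ofBool_surjective x
      simp only [ofBool_eq_ofBool_iff]
      revert b; decide +kernel
  rw [← Nat.card_eq_of_bijective _ hbij]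
  simp

theorem adj_flip (i : Fin 4) (x : HVert) : H.Adj x (flip i x) := by
  obtain ⟨v, rfl⟩ := Quotient.exists_rep x
  exact ⟨(flip_ne_self i _).symm, v, CubeV.flip i v, rfl, rfl, i, CubeV.diffExactly_flip i v⟩

theorem D_eq_range (i : Fin 4) : D i = Set.range fun x => s(x, flip i x) := by
  ext e
  constructor
  · rintro ⟨-, v, w, rfl, h⟩
    exact ⟨⟦v⟧, by rw [CubeV.eq_flip_of_diffExactly h]; rfl⟩
  · rintro ⟨x, rfl⟩
    obtain ⟨v, rfl⟩ := Quotient.exists_rep x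
    exact ⟨adj_flip i _, v, CubeV.flip i v, rfl, CubeV.diffExactly_flip i v⟩

theorem mk_flip_mem_D (i : Fin 4) (x : HVert) : s(x, flip i x) ∈ D i := by
  rw [D_eq_range]
  exact ⟨x, rfl⟩

theorem mk_flip_mem_D' (i : Fin 4) (x : HVert) : s(flip i x, x) ∈ D i :=
  Sym2.eq_swap ▸ mk_flip_mem_D i x

theorem vertexDisjoint_D (i : Fin 4) : VertexDisjoint (D i) :=
  D_eq_range i ▸ vertexDisjoint_range_of_involutive (flip_flip i)

theorem exists_mem_D {e : Sym2 HVert} (he : e ∈ H.edgeSet) : ∃ i, e ∈ D i := by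
  induction e using Sym2.ind with
  | h x y =>
    obtain ⟨-, v, w, rfl, rfl, i, h⟩ := id he
    exact ⟨i, he, v, w, rfl, h⟩

open SimpleGraph in
theorem exists_isCycle_of_mem_D {c : Fin 4} {e f : Sym2 HVert} (he : e ∈ D c) (hf : f ∈ D c)
    (hef : ∀ x ∈ e, x ∉ f) :
    ∃ (j : Fin 4) (x : HVert) (p : H.Walk x x), j ≠ c ∧ p.IsCycle ∧ p.length = 4 ∧
      e ∈ p.edges ∧ f ∈ p.edges ∧ ∀ g ∈ p.edges, g ∈ D c ∪ D j := by
  rw [D_eq_range] at he hf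
  obtain ⟨x, rfl⟩ := he
  obtain ⟨y, rfl⟩ := hf
  obtain ⟨j, hjc, hy⟩ := exists_eq_flip_or_eq_flip_flip c (x := x) (y := y)
    (fun h => hef y (by simp [h]) (Sym2.mem_mk_left _ _))
    (fun h => hef y (by simp [h]) (Sym2.mem_mk_left _ _))
  have hyj : s(y, flip c y) = s(flip c (flip j x), flip j x) := by
    rcases hy with rfl | rfl
    · exact Sym2.eq_swap
    · rw [flip_flip]
  have hbc : H.Adj (flip c x) (flip c (flip j x)) := flip_comm c j x ▸ adj_flip j (flip c x)
  let p : H.Walk x x :=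
    .cons (adj_flip c x) (.cons hbc (.cons (adj_flip c _).symm (.cons (adj_flip j x).symm .nil)))
  have hp : p.IsCycle := Walk.isCycle_square _ _ _ _ (flip_flip_ne_self hjc.symm x).symm
    fun h => flip_flip_ne_self hjc.symm x (by rw [← h, flip_flip])
  refine ⟨j, x, p, hjc, hp, rfl, by simp [p], by simp [p, hyj], ?_⟩
  simp only [p, Walk.edges_cons, Walk.edges_nil, List.mem_cons, List.not_mem_nil, or_false]
  rintro g (rfl | rfl | rfl | rfl)
  · exact Or.inl (mk_flip_mem_D c x)
  · exact Or.inr (flip_comm c j x ▸ mk_flip_mem_D j (flip c x))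
  · exact Or.inl (mk_flip_mem_D' c _)
  · exact Or.inr (mk_flip_mem_D' j x)

end HVert

open HVert

/-- a partition of the edge set of `H` into four perfect matchings is a
chiral partition if and only if every 4-cycle of `H` whose edge set is contained in
`D i ∪ D j` for some `i ≠ j` contains exactly one edge from each of the four
matchings. -/
theorem stmt_8 :
    ∀ M : Fin 4 → Set (Sym2 HVert),
      (∀ k, IsPM H (M k)) →
      (∀ e ∈ H.edgeSet, ∃! k, e ∈ M k) →
      ((∀ k i, ∃! e, e ∈ M k ∧ e ∈ D i) ↔
        ∀ (v : HVert) (p : H.Walk v v), p.IsCycle → p.length = 4 →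
          (∃ i j : Fin 4, i ≠ j ∧ ∀ e ∈ p.edges, e ∈ D i ∪ D j) →
          ∀ k, ∃! e, e ∈ p.edges ∧ e ∈ M k) := by
  intro M hPM hPart
  constructor
  · rintro hChi v p hp h4 ⟨i, j, -, hij⟩
    refine existsUnique_mem_inter_of_le_ncard (hp.isCircuit.isTrail.ncard_setOf_mem_edges.trans h4).ge
      (fun e he => (hPart e (p.edges_subset_edgeSet he)).exists) fun k => ?_
    exact hp.subsingleton_edges_inter vertexDisjoint_D (hPM k).vertexDisjoint
      (fun c _ he _ hf => (hChi k c).unique he hf) h4 hij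
  · intro hCyc k
    have hsep : ∀ c, (M k ∩ D c).Subsingleton := by
      rintro c e ⟨heM, he⟩ f ⟨hfM, hf⟩
      by_contra hef
      obtain ⟨j, x, p, hjc, hp, h4, hep, hfp, hpD⟩ := exists_isCycle_of_mem_D he hf
        fun y hye hyf => hef ((hPM k).vertexDisjoint heM hfM hye hyf)
      exact hef ((hCyc x p hp h4 ⟨c, j, hjc.symm, hpD⟩ k).unique ⟨hep, heM⟩ ⟨hfp, hfM⟩)
    have hcard : 4 ≤ (M k).ncard := by
      have := (hPM k).card_le_two_mul_ncard
      rw [card_eq_eight] at this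
      omega
    exact existsUnique_mem_inter_of_le_ncard hcard (fun e he => exists_mem_D ((hPM k).1 he)) hsep
end
end

section
/- For each i ∈ {1,2,3,4}, let R_i ∈ O(4,ℝ) be the diagonal matrix that negates the i-th coordinate and fixes all others. Then R_i maps {-1,1}^4 onto itself and the automorphism of H induced by the class of R_i in G/{±I} maps each direction class D_j onto itself; however, for every chiral partition {M_1, M_2, M_3, M_4} of H, this automorphism does not permute the set {M_1, M_2, M_3, M_4}. -/
open scoped Classical

noncomputable section

/-- the diagonal orthogonal matrix negating the `i`-th coordinate -/
def R (i : Fin 4) : Matrix (Fin 4) (Fin 4) ℝ :=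
  Matrix.diagonal (fun j => if j = i then -1 else 1)

/-
The automorphism induced by `R i` fixes every edge of direction `i` (it swaps its two
endpoints) and moves every edge of any other direction `j`. If it permuted the matchings of a
chiral partition, the matching `M` containing a given edge of direction `i` would be mapped to
itself, because the matchings partition the edges. The unique edge of `M` of a direction
`j ≠ i` would then be mapped to an edge of `M` of direction `j`, hence fixed: a contradiction.
-/

lemma Function.Involutive.image_eq_of_mapsTo {α : Type*} {f : α → α} (hf : f.Involutive)
    {s : Set α} (hs : Set.MapsTo f s s) : f '' s = s :=
  (Set.InvOn.bijOn ⟨fun x _ => hf x, fun x _ => hf x⟩ hs hs).image_eq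

lemma image_ne_of_fixed_of_moved {α ι : Type*} {f : α → α} {M : ι → Set α} {B : Set α}
    {k : ι} {a : α} (ha : a ∈ M k) (ha_unique : ∃! k, a ∈ M k) (hfa : f a = a)
    (hB : ∃! b, b ∈ M k ∧ b ∈ B) (hfB : Set.MapsTo f B B) (hmove : ∀ b ∈ B, f b ≠ b)
    (l : ι) : f '' M k ≠ M l := by
  intro hl
  obtain rfl : l = k := ha_unique.unique (hl ▸ ⟨a, ha, hfa⟩) ha
  obtain ⟨b, ⟨hbM, hbB⟩, hb_unique⟩ := hB
  exact hmove b hbB (hb_unique _ ⟨hl ▸ ⟨b, hbM, rfl⟩, hfB hbB⟩)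

namespace HemiHypercube

def reflect {n : ℕ} (i : Fin n) (v : Fin n → ℝ) : Fin n → ℝ :=
  fun j => if j = i then -v j else v j

section reflect

variable {n : ℕ} (i : Fin n)

@[simp] lemma reflect_apply_self (v : Fin n → ℝ) : reflect i v i = -v i := if_pos rfl

@[simp] lemma reflect_apply_of_ne {j : Fin n} (hji : j ≠ i) (v : Fin n → ℝ) :
    reflect i v j = v j := if_neg hji

lemma reflect_involutive : Function.Involutive (reflect i) := by
  intro v; funext j; by_cases h : j = i <;> simp [reflect, h]

lemma reflect_neg (v : Fin n → ℝ) : reflect i (-v) = -reflect i v := by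
  funext j; by_cases h : j = i <;> simp [reflect, h]

lemma diffExactly_reflect_iff {v w : Fin n → ℝ} {j : Fin n} :
    diffExactly (reflect i v) (reflect i w) j ↔ diffExactly v w j := by
  refine forall_congr' fun k => ?_
  by_cases h : k = i <;> simp [reflect, h]

end reflect

lemma R_mulVec (i : Fin 4) (v : V4) : Matrix.mulVec (R i) v = reflect i v := by
  funext j
  simp only [R, Matrix.mulVec_diagonal, reflect]
  split <;> ring

lemma R_mem_orthogonalGroup (i : Fin 4) : R i ∈ Matrix.orthogonalGroup (Fin 4) ℝ := by
  rw [Matrix.mem_orthogonalGroup_iff, R, Matrix.diagonal_transpose,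
    Matrix.diagonal_mul_diagonal, ← Matrix.diagonal_one]
  congr 1; funext j; split <;> norm_num

lemma reflect_mem_cubeSet (i : Fin 4) {v : V4} (hv : v ∈ cubeSet) : reflect i v ∈ cubeSet := by
  intro j
  by_cases h : j = i
  · subst h; simpa [or_comm, neg_eq_iff_eq_neg] using hv j
  · simpa [h] using hv j

lemma R_image_cubeSet (i : Fin 4) : Matrix.mulVec (R i) '' cubeSet = cubeSet := by
  simp only [R_mulVec]
  exact (reflect_involutive i).image_eq_of_mapsTo fun _ => reflect_mem_cubeSet i

lemma eq_neg_of_ne_of_mem_cubeSet {v w : V4} (hv : v ∈ cubeSet) (hw : w ∈ cubeSet) {j : Fin 4}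
    (h : v j ≠ w j) : w j = -v j := by
  rcases hv j with h1 | h1 <;> rcases hw j with h2 | h2 <;> simp_all

lemma reflect_eq_of_diffExactly {v w : V4} (hv : v ∈ cubeSet) (hw : w ∈ cubeSet) {j : Fin 4}
    (h : diffExactly v w j) : reflect j v = w := by
  funext k
  by_cases hk : k = j
  · subst hk; simp [eq_neg_of_ne_of_mem_cubeSet hv hw ((h k).mpr rfl)]
  · rw [reflect_apply_of_ne _ hk]; exact not_not.mp (mt (h k).mp hk)

def reflectCube (i : Fin 4) (v : CubeV) : CubeV := ⟨reflect i v, reflect_mem_cubeSet i v.2⟩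

lemma mk_eq_mk_iff {v w : CubeV} : (⟦v⟧ : HVert) = ⟦w⟧ ↔ (v : V4) = w ∨ (v : V4) = -w :=
  Quotient.eq

lemma apply_ne_neg_apply (v : CubeV) (a : Fin 4) : (v : V4) a ≠ -(v : V4) a := by
  rcases v.2 a with h | h <;> rw [h] <;> norm_num

lemma mk_ne_mk_of_apply_ne_of_apply_eq {v w : CubeV} {a b : Fin 4}
    (ha : (v : V4) a ≠ (w : V4) a) (hb : (v : V4) b = (w : V4) b) :
    (⟦v⟧ : HVert) ≠ ⟦w⟧ := by
  rw [Ne, mk_eq_mk_iff, not_or]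
  exact ⟨fun h => ha (congrFun h a),
    fun h => apply_ne_neg_apply w b (hb.symm.trans (congrFun h b))⟩

def reflectH (i : Fin 4) : HVert → HVert :=
  Quotient.map (reflectCube i) fun v w h => by
    rcases h with h | h
    · exact Or.inl (congrArg (reflect i) h)
    · exact Or.inr ((congrArg (reflect i) h).trans (reflect_neg i _))

@[simp] lemma reflectH_mk (i : Fin 4) (v : CubeV) :
    reflectH i ⟦v⟧ = ⟦reflectCube i v⟧ := rfl

lemma reflectH_involutive (i : Fin 4) : Function.Involutive (reflectH i) := by
  intro x
  induction x using Quotient.ind with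
  | _ v => exact Quotient.sound (Or.inl (reflect_involutive i v))

lemma reflectH_adj (i : Fin 4) {x y : HVert} (h : H.Adj x y) :
    H.Adj (reflectH i x) (reflectH i y) := by
  obtain ⟨hxy, v, w, rfl, rfl, j, hd⟩ := h
  exact ⟨(reflectH_involutive i).injective.ne hxy, reflectCube i v, reflectCube i w, rfl, rfl,
    j, diffExactly_reflect_iff i |>.mpr hd⟩

def reflectIso (i : Fin 4) : H ≃g H where
  toEquiv := (reflectH_involutive i).toPerm
  map_rel_iff' {x y} := ⟨fun h => by
    simpa only [reflectH_involutive i _] using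
      reflectH_adj i (x := reflectH i x) (y := reflectH i y) h, reflectH_adj i⟩

lemma coe_reflectIso (i : Fin 4) : ⇑(reflectIso i) = reflectH i := rfl

lemma map_reflectIso_mk (i : Fin 4) (v w : CubeV) :
    Sym2.map (reflectIso i) (s(⟦v⟧, ⟦w⟧) : Sym2 HVert) =
      (s(⟦reflectCube i v⟧, ⟦reflectCube i w⟧) : Sym2 HVert) := rfl

lemma exists_eq_mk_reflect_of_mem_D {j : Fin 4} {e : Sym2 HVert} (he : e ∈ D j) :
    ∃ v : CubeV, e = (s(⟦v⟧, ⟦reflectCube j v⟧) : Sym2 HVert) := by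
  obtain ⟨-, v, w, rfl, hd⟩ := he
  obtain rfl : reflectCube j v = w := Subtype.ext (reflect_eq_of_diffExactly v.2 w.2 hd)
  exact ⟨v, rfl⟩

lemma mapsTo_D (i j : Fin 4) : Set.MapsTo (Sym2.map (reflectIso i)) (D j) (D j) := by
  rintro _ ⟨he, v, w, rfl, hd⟩
  exact ⟨(reflectIso i).map_mem_edgeSet_iff.mpr he, reflectCube i v, reflectCube i w, rfl,
    diffExactly_reflect_iff i |>.mpr hd⟩

lemma image_D (i j : Fin 4) : Sym2.map (reflectIso i) '' D j = D j := by
  refine Function.Involutive.image_eq_of_mapsTo (fun e => ?_) (mapsTo_D i j)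
  rw [Sym2.map_map, coe_reflectIso, (reflectH_involutive i).comp_self, Sym2.map_id, id]

lemma map_eq_self_of_mem_D {i : Fin 4} {e : Sym2 HVert} (he : e ∈ D i) :
    Sym2.map (reflectIso i) e = e := by
  obtain ⟨v, rfl⟩ := exists_eq_mk_reflect_of_mem_D he
  rw [map_reflectIso_mk,
    show reflectCube i (reflectCube i v) = v from Subtype.ext (reflect_involutive i v)]
  exact Sym2.eq_swap

lemma exists_ne_ne (i j : Fin 4) : ∃ k : Fin 4, k ≠ i ∧ k ≠ j := by
  revert i j; decide

lemma map_ne_self_of_mem_D {i j : Fin 4} (hji : j ≠ i) {e : Sym2 HVert} (he : e ∈ D j) :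
    Sym2.map (reflectIso i) e ≠ e := by
  obtain ⟨v, rfl⟩ := exists_eq_mk_reflect_of_mem_D he
  obtain ⟨k, hki, hkj⟩ := exists_ne_ne i j
  have hvi : (reflectCube i v : V4) i ≠ (v : V4) i := by
    simpa [reflectCube] using (apply_ne_neg_apply v i).symm
  rw [map_reflectIso_mk]
  intro h
  rcases Sym2.eq_iff.mp h with ⟨h1, -⟩ | ⟨h1, -⟩
  · exact mk_ne_mk_of_apply_ne_of_apply_eq (a := i) (b := j) hvi (by simp [reflectCube, hji]) h1
  · exact mk_ne_mk_of_apply_ne_of_apply_eq (a := i) (b := k)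
      (by simpa [reflectCube, hji.symm] using hvi) (by simp [reflectCube, hki, hkj]) h1

end HemiHypercube

open HemiHypercube in
/-- each coordinate reflection `R i` lies in `O(4,ℝ)`, maps `{-1,1}^4`
onto itself, and the automorphism of `H` it induces (which represents the class of
`R i` in `G/{±I}`) maps each direction class `D j` onto itself; however, for every
chiral partition `{M k}` of `H`, this automorphism does not permute the set of
matchings. -/
theorem stmt_11 :
    ∀ i : Fin 4,
      R i ∈ Matrix.orthogonalGroup (Fin 4) ℝ ∧
      Matrix.mulVec (R i) '' cubeSet = cubeSet ∧
      ∃ φ : H ≃g H,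
        (∀ v : CubeV, ∃ w : CubeV, (w : V4) = Matrix.mulVec (R i) (v : V4) ∧
          φ (⟦v⟧ : HVert) = (⟦w⟧ : HVert)) ∧
        (∀ j : Fin 4, Sym2.map ⇑φ '' D j = D j) ∧
        (∀ M : Fin 4 → Set (Sym2 HVert), IsChiralPartition M →
          ¬ (∀ k : Fin 4, ∃ l : Fin 4, Sym2.map ⇑φ '' M k = M l)) := by
  intro i
  refine ⟨R_mem_orthogonalGroup i, R_image_cubeSet i, reflectIso i,
    fun v => ⟨reflectCube i v, (R_mulVec i v).symm, rfl⟩, image_D i, ?_⟩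
  rintro M ⟨-, hPart, hUnique⟩ hPerm
  obtain ⟨a, ⟨haM, haD⟩, -⟩ := hUnique 0 i
  obtain ⟨j, hji, -⟩ := exists_ne_ne i i
  obtain ⟨l, hl⟩ := hPerm 0
  exact image_ne_of_fixed_of_moved haM (hPart a haD.1) (map_eq_self_of_mem_D haD)
    (hUnique 0 j) (mapsTo_D i j) (fun _ => map_ne_self_of_mem_D hji) l hl
end
end
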